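/- arXiv:2301.00631 — 5 statements merged into one kernel-verified Lean document; each statement's English description precedes it below -/
import Mathlib

section
/- Let n, b ∈ ℕ*, let S ⊆ ℝ^q, and for each i ∈ {1,…,n} let h_i : S → ℝ^q be globally Lipschitz on S with constant L_i; set L² := n⁻¹ Σ_{i=1}^n L_i² and h̄ := n⁻¹ Σ_{i=1}^n h_i. Let I_1, …, I_b be independent random variables each uniformly distributed on {1, …, n}, and set h_𝓑 := b⁻¹ Σ_{ℓ=1}^b h_{I_ℓ}. Then for all s, s' ∈ S: E[ ‖ ( h_𝓑(s) − h_𝓑(s') ) − ( h̄(s) − h̄(s') ) ‖² ] ≤ (1/b) ( L² ‖s − s'‖² − ‖ h̄(s) − h̄(s') ‖² ). -/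
open MeasureTheory
open ProbabilityTheory

lemma integral_comp_fintype' {Ω : Type*} [MeasurableSpace Ω] {ι : Type*} [Fintype ι]
    [MeasurableSpace ι] [MeasurableSingletonClass ι]
    (μ : Measure Ω) [IsFiniteMeasure μ]
    {F : Type*} [NormedAddCommGroup F] [NormedSpace ℝ F] [CompleteSpace F]
    (X : Ω → ι) (hX : Measurable X) (f : ι → F) :
    ∫ ω, f (X ω) ∂μ = ∑ i, (μ (X ⁻¹' {i})).toReal • f i := by
  have hrw : (fun ω => f (X ω)) = fun ω => ∑ i, Set.indicator (X ⁻¹' {i}) (fun _ => f i) ω := by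
    funext ω
    rw [Finset.sum_eq_single (X ω)]
    · simp
    · intro j _ hj
      exact Set.indicator_of_notMem (by simp [Ne.symm hj]) _
    · simp
  rw [hrw, integral_finset_sum]
  · refine Finset.sum_congr rfl fun i _ => ?_
    rw [integral_indicator_const _ (hX (measurableSet_singleton i))]
    rfl
  · intro i _
    exact (integrable_const (f i)).indicator (hX (measurableSet_singleton i))

lemma integrable_comp_fintype' {Ω : Type*} [MeasurableSpace Ω] {ι : Type*} [Fintype ι]
    [MeasurableSpace ι] [MeasurableSingletonClass ι]
    (μ : Measure Ω) [IsFiniteMeasure μ]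
    {F : Type*} [NormedAddCommGroup F] [NormedSpace ℝ F]
    (X : Ω → ι) (hX : Measurable X) (f : ι → F) :
    Integrable (fun ω => f (X ω)) μ := by
  have hrw : (fun ω => f (X ω)) = fun ω => ∑ i, Set.indicator (X ⁻¹' {i}) (fun _ => f i) ω := by
    funext ω
    rw [Finset.sum_eq_single (X ω)]
    · simp
    · intro j _ hj
      exact Set.indicator_of_notMem (by simp [Ne.symm hj]) _
    · simp
  rw [hrw]
  exact integrable_finset_sum _ fun i _ =>
    (integrable_const (f i)).indicator (hX (measurableSet_singleton i))

/-- For `h₁, …, h_n : S → ℝ^q` Lipschitz on `S` with constants `Lᵢ`,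
`L² := n⁻¹ ∑ᵢ Lᵢ²`, `h̄ := n⁻¹ ∑ᵢ hᵢ`, and i.i.d. indices `I₁, …, I_b` uniform on
`{1, …, n}`, with `h_𝓑 := b⁻¹ ∑_ℓ h_{I_ℓ}`, for all `s, s' ∈ S`:
`E[‖(h_𝓑(s) − h_𝓑(s')) − (h̄(s) − h̄(s'))‖²] ≤ (1/b)(L²‖s − s'‖² − ‖h̄(s) − h̄(s')‖²)`. -/
theorem minibatch_lipschitz_variance_bound
    {Ω : Type*} [MeasurableSpace Ω] (μ : Measure Ω) [IsProbabilityMeasure μ]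
    (n b q : ℕ) (hn : 0 < n) (hb : 0 < b)
    (S : Set (EuclideanSpace ℝ (Fin q)))
    (h : Fin n → EuclideanSpace ℝ (Fin q) → EuclideanSpace ℝ (Fin q))
    (L : Fin n → ℝ)
    (hlip : ∀ i, ∀ s ∈ S, ∀ s' ∈ S, ‖h i s - h i s'‖ ≤ L i * ‖s - s'‖)
    (hbar : EuclideanSpace ℝ (Fin q) → EuclideanSpace ℝ (Fin q))
    (hhbar : ∀ s, hbar s = (n : ℝ)⁻¹ • ∑ i, h i s)
    (I : Fin b → Ω → Fin n) (hmeas : ∀ ℓ, Measurable (I ℓ))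
    (hindep : ProbabilityTheory.iIndepFun I μ)
    (hunif : ∀ ℓ i, μ {ω | I ℓ ω = i} = (n : ENNReal)⁻¹)
    (s s' : EuclideanSpace ℝ (Fin q)) (hs : s ∈ S) (hs' : s' ∈ S) :
    ∫ ω, ‖((b : ℝ)⁻¹ • ∑ ℓ, h (I ℓ ω) s - (b : ℝ)⁻¹ • ∑ ℓ, h (I ℓ ω) s')
          - (hbar s - hbar s')‖ ^ 2 ∂μ
      ≤ (b : ℝ)⁻¹ * (((n : ℝ)⁻¹ * ∑ i, (L i) ^ 2) * ‖s - s'‖ ^ 2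
          - ‖hbar s - hbar s'‖ ^ 2) := by
  have hnR : ((n : ℝ)) ≠ 0 := Nat.cast_ne_zero.mpr hn.ne'
  have hbR : ((b : ℝ)) ≠ 0 := Nat.cast_ne_zero.mpr hb.ne'
  set Δ : EuclideanSpace ℝ (Fin q) := hbar s - hbar s' with hΔdef
  set d : Fin n → EuclideanSpace ℝ (Fin q) := fun i => h i s - h i s' with hddef
  set g : Fin n → EuclideanSpace ℝ (Fin q) := fun i => d i - Δ with hgdef
  -- sum of d
  have hsumd : ∑ i, d i = (n : ℝ) • Δ := by
    have : Δ = (n : ℝ)⁻¹ • ∑ i, d i := by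
      rw [hΔdef, hhbar s, hhbar s', hddef, ← smul_sub, Finset.sum_sub_distrib]
    rw [this, smul_smul, mul_inv_cancel₀ hnR, one_smul]
  have hsumg : ∑ i, g i = 0 := by
    show ∑ i, (d i - Δ) = 0
    rw [Finset.sum_sub_distrib, Finset.sum_const, Finset.card_univ, Fintype.card_fin,
      ← Nat.cast_smul_eq_nsmul ℝ, hsumd, sub_self]
  -- pointwise rewrite of the integrand argument
  have hpt : ∀ ω : Ω, ((b : ℝ)⁻¹ • ∑ ℓ, h (I ℓ ω) s - (b : ℝ)⁻¹ • ∑ ℓ, h (I ℓ ω) s') - Δ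
      = (b : ℝ)⁻¹ • ∑ ℓ, g (I ℓ ω) := by
    intro ω
    have : ∑ ℓ, g (I ℓ ω) = (∑ ℓ, h (I ℓ ω) s - ∑ ℓ, h (I ℓ ω) s') - (b : ℝ) • Δ := by
      show ∑ ℓ, (d (I ℓ ω) - Δ) = _
      rw [Finset.sum_sub_distrib, Finset.sum_const, Finset.card_univ, Fintype.card_fin,
        ← Nat.cast_smul_eq_nsmul ℝ]
      show (∑ ℓ, (h (I ℓ ω) s - h (I ℓ ω) s')) - _ = _
      rw [Finset.sum_sub_distrib]
    rw [this, smul_sub, smul_sub, smul_smul, inv_mul_cancel₀ hbR, one_smul]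
  -- integrability of inner-product terms
  have hInt : ∀ ℓ ℓ' : Fin b,
      Integrable (fun ω => (inner ℝ (g (I ℓ ω)) (g (I ℓ' ω)) : ℝ)) μ := by
    intro ℓ ℓ'
    exact integrable_comp_fintype' μ (fun ω => (I ℓ ω, I ℓ' ω))
      ((hmeas ℓ).prodMk (hmeas ℓ')) (fun p => (inner ℝ (g p.1) (g p.2) : ℝ))
  have htoReal : ((n : ENNReal)⁻¹).toReal = (n : ℝ)⁻¹ := by
    simp
  have hpre : ∀ (ℓ : Fin b) (i : Fin n), I ℓ ⁻¹' {i} = {ω | I ℓ ω = i} := fun ℓ i => rfl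
  -- cross terms vanish
  have hcross : ∀ ℓ ℓ' : Fin b, ℓ ≠ ℓ' →
      ∫ ω, (inner ℝ (g (I ℓ ω)) (g (I ℓ' ω)) : ℝ) ∂μ = 0 := by
    intro ℓ ℓ' hne
    rw [integral_comp_fintype' μ (fun ω => (I ℓ ω, I ℓ' ω))
      ((hmeas ℓ).prodMk (hmeas ℓ')) (fun p => (inner ℝ (g p.1) (g p.2) : ℝ))]
    have hμ : ∀ p : Fin n × Fin n,
        μ ((fun ω => (I ℓ ω, I ℓ' ω)) ⁻¹' {p}) = (n : ENNReal)⁻¹ * (n : ENNReal)⁻¹ := by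
      intro p
      have hset : (fun ω => (I ℓ ω, I ℓ' ω)) ⁻¹' {p} = (I ℓ ⁻¹' {p.1}) ∩ (I ℓ' ⁻¹' {p.2}) := by
        ext ω; simp [Prod.ext_iff]
      rw [hset, (hindep.indepFun hne).measure_inter_preimage_eq_mul {p.1} {p.2}
        (measurableSet_singleton _) (measurableSet_singleton _),
        hpre, hpre, hunif, hunif]
    have : ∀ p : Fin n × Fin n,
        (μ ((fun ω => (I ℓ ω, I ℓ' ω)) ⁻¹' {p})).toReal • (inner ℝ (g p.1) (g p.2) : ℝ)
        = ((n : ℝ)⁻¹ * (n : ℝ)⁻¹) * (inner ℝ (g p.1) (g p.2) : ℝ) := by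
      intro p
      rw [hμ p]
      simp [smul_eq_mul]
    rw [Finset.sum_congr rfl fun p _ => this p, ← Finset.mul_sum]
    rw [Fintype.sum_prod_type]
    simp only [← sum_inner, ← inner_sum, hsumg, inner_zero_left, mul_zero]
  -- diagonal terms
  have hdiag : ∀ ℓ : Fin b,
      ∫ ω, (inner ℝ (g (I ℓ ω)) (g (I ℓ ω)) : ℝ) ∂μ = (n : ℝ)⁻¹ * ∑ i, ‖g i‖ ^ 2 := by
    intro ℓ
    rw [integral_comp_fintype' μ (I ℓ) (hmeas ℓ) (fun i => (inner ℝ (g i) (g i) : ℝ))]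
    rw [Finset.mul_sum]
    refine Finset.sum_congr rfl fun i _ => ?_
    rw [hpre, hunif, htoReal, smul_eq_mul, real_inner_self_eq_norm_sq]
  -- main expectation computation
  have hT : ∫ ω, ‖∑ ℓ, g (I ℓ ω)‖ ^ 2 ∂μ = (b : ℝ) * ((n : ℝ)⁻¹ * ∑ i, ‖g i‖ ^ 2) := by
    have hptin : ∀ ω : Ω, ‖∑ ℓ, g (I ℓ ω)‖ ^ 2
        = ∑ ℓ, ∑ ℓ', (inner ℝ (g (I ℓ ω)) (g (I ℓ' ω)) : ℝ) := by
      intro ω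
      rw [← real_inner_self_eq_norm_sq]
      simp only [sum_inner, inner_sum]
      rw [Finset.sum_comm]
    simp only [hptin]
    rw [integral_finset_sum _ (fun ℓ _ => integrable_finset_sum _ (fun ℓ' _ => hInt ℓ ℓ'))]
    have : ∀ ℓ : Fin b, ∫ ω, ∑ ℓ', (inner ℝ (g (I ℓ ω)) (g (I ℓ' ω)) : ℝ) ∂μ
        = (n : ℝ)⁻¹ * ∑ i, ‖g i‖ ^ 2 := by
      intro ℓ
      rw [integral_finset_sum _ (fun ℓ' _ => hInt ℓ ℓ')]
      rw [Finset.sum_eq_single ℓ]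
      · exact hdiag ℓ
      · intro ℓ' _ hne
        exact hcross ℓ ℓ' (Ne.symm hne)
      · simp
    rw [Finset.sum_congr rfl fun ℓ _ => this ℓ, Finset.sum_const, Finset.card_univ,
      Fintype.card_fin, nsmul_eq_mul]
  -- sum of ‖g i‖²
  have hgsum : ∑ i, ‖g i‖ ^ 2 = (∑ i, ‖d i‖ ^ 2) - (n : ℝ) * ‖Δ‖ ^ 2 := by
    have h1 : ∀ i, ‖g i‖ ^ 2 = ‖d i‖ ^ 2 - 2 * (inner ℝ (d i) Δ : ℝ) + ‖Δ‖ ^ 2 := by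
      intro i
      rw [hgdef]
      exact norm_sub_sq_real (d i) Δ
    rw [Finset.sum_congr rfl fun i _ => h1 i]
    rw [Finset.sum_add_distrib, Finset.sum_sub_distrib, ← Finset.mul_sum, ← sum_inner,
      hsumd, real_inner_smul_left, real_inner_self_eq_norm_sq, Finset.sum_const,
      Finset.card_univ, Fintype.card_fin, nsmul_eq_mul]
    ring
  -- Lipschitz bound
  have hLb : ∑ i, ‖d i‖ ^ 2 ≤ ∑ i, L i ^ 2 * ‖s - s'‖ ^ 2 := by
    refine Finset.sum_le_sum fun i _ => ?_
    have := pow_le_pow_left₀ (norm_nonneg _) (hlip i s hs s' hs') 2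
    rwa [mul_pow] at this
  -- assemble
  calc ∫ ω, ‖((b : ℝ)⁻¹ • ∑ ℓ, h (I ℓ ω) s - (b : ℝ)⁻¹ • ∑ ℓ, h (I ℓ ω) s') - Δ‖ ^ 2 ∂μ
      = ∫ ω, ((b : ℝ)⁻¹)^2 * ‖∑ ℓ, g (I ℓ ω)‖ ^ 2 ∂μ := by
        refine integral_congr_ae (Filter.Eventually.of_forall fun ω => ?_)
        show ‖((b : ℝ)⁻¹ • ∑ ℓ, h (I ℓ ω) s - (b : ℝ)⁻¹ • ∑ ℓ, h (I ℓ ω) s') - Δ‖ ^ 2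
            = ((b : ℝ)⁻¹)^2 * ‖∑ ℓ, g (I ℓ ω)‖ ^ 2
        rw [hpt ω, norm_smul, mul_pow]
        rw [Real.norm_eq_abs, abs_of_nonneg (inv_nonneg.mpr (Nat.cast_nonneg b : (0:ℝ) ≤ (b:ℝ)))]
    _ = ((b : ℝ)⁻¹)^2 * ((b : ℝ) * ((n : ℝ)⁻¹ * ∑ i, ‖g i‖ ^ 2)) := by
        rw [integral_const_mul, hT]
    _ = (b : ℝ)⁻¹ * ((n : ℝ)⁻¹ * ∑ i, ‖d i‖ ^ 2 - ‖Δ‖ ^ 2) := by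
        rw [hgsum]
        field_simp
    _ ≤ (b : ℝ)⁻¹ * (((n : ℝ)⁻¹ * ∑ i, (L i) ^ 2) * ‖s - s'‖ ^ 2 - ‖Δ‖ ^ 2) := by
        have h2 : (n : ℝ)⁻¹ * ∑ i, ‖d i‖ ^ 2
            ≤ ((n : ℝ)⁻¹ * ∑ i, (L i) ^ 2) * ‖s - s'‖ ^ 2 := by
          rw [mul_assoc]
          refine mul_le_mul_of_nonneg_left ?_ (inv_nonneg.mpr (Nat.cast_nonneg n))
          rw [Finset.sum_mul]
          exact hLb
        have hbnn : (0:ℝ) ≤ (b : ℝ)⁻¹ := inv_nonneg.mpr (Nat.cast_nonneg b)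
        exact mul_le_mul_of_nonneg_left (by linarith) hbnn
end

section
/- Let n ∈ ℕ*, let (I_1, …, I_n) be a uniform random ordering of {1, …, n} (equivalently, (I_1,…,I_ℓ) is a uniform ordered sample without replacement for each ℓ ≤ n), and let φ : {1,…,n} → ℝ^q satisfy Σ_{i=1}^n φ(i) = 0. Then for every ℓ ∈ {1,…,n}: E[ ‖ Σ_{r=1}^ℓ φ(I_r) ‖² ] ≤ ℓ · E[ ‖φ(I_1)‖² ] = (ℓ/n) Σ_{i=1}^n ‖φ(i)‖². -/
open MeasureTheory

/-- For a uniform random ordering `(I₁, …, I_n)` of `{1, …, n}`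
(a uniformly distributed random bijection of `{1,…,n}`) and `φ : {1,…,n} → ℝ^q` with
`∑ᵢ φ(i) = 0`, for every `ℓ ∈ {1, …, n}`:
`E[‖∑_{r=1}^ℓ φ(I_r)‖²] ≤ ℓ · E[‖φ(I₁)‖²]` and `ℓ · E[‖φ(I₁)‖²] = (ℓ/n) ∑ᵢ ‖φ(i)‖²`. -/
theorem sampling_without_replacement_centered_bound
    {Ω : Type*} [MeasurableSpace Ω] (μ : Measure Ω) [IsProbabilityMeasure μ]
    (n q : ℕ) (hn : 0 < n)
    (J : Ω → (Fin n → Fin n)) (hmeas : Measurable J)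
    (hunif : ∀ g : Fin n → Fin n, Function.Bijective g →
      μ {ω | J ω = g} = ((Fintype.card (Equiv.Perm (Fin n)) : ENNReal))⁻¹)
    (φ : Fin n → EuclideanSpace ℝ (Fin q)) (hφ : ∑ i, φ i = 0)
    (ℓ : ℕ) (hℓ1 : 1 ≤ ℓ) (hℓn : ℓ ≤ n) :
    (∫ ω, ‖∑ r ∈ Finset.univ.filter (fun r : Fin n => (r : ℕ) < ℓ), φ (J ω r)‖ ^ 2 ∂μ
        ≤ (ℓ : ℝ) * ∫ ω, ‖φ (J ω ⟨0, hn⟩)‖ ^ 2 ∂μ) ∧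
      (ℓ : ℝ) * (∫ ω, ‖φ (J ω ⟨0, hn⟩)‖ ^ 2 ∂μ)
        = ((ℓ : ℝ) / (n : ℝ)) * ∑ i, ‖φ i‖ ^ 2 := by
  classical
  set z : Fin n := ⟨0, hn⟩ with hzdef
  set T : Finset (Fin n) := Finset.univ.filter (fun r : Fin n => (r : ℕ) < ℓ) with hTdef
  have hTcard : T.card = ℓ := by
    have hmap : T = Finset.map (Fin.castLEEmb hℓn) Finset.univ := by
      ext r
      simp [hTdef, Fin.castLEEmb, Fin.ext_iff]
      constructor
      · intro hr; exact ⟨⟨r, hr⟩, rfl⟩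
      · rintro ⟨a, ha⟩; omega
    rw [hmap]; simp
  have hms : ∀ g : Fin n → Fin n, MeasurableSet {ω | J ω = g} :=
    fun g => hmeas (MeasurableSet.singleton g)
  have hcard : Fintype.card (Equiv.Perm (Fin n)) = n.factorial := by
    simp [Fintype.card_perm]
  -- non-bijective values have measure zero
  have hU : μ {ω | ¬ Function.Bijective (J ω)} = 0 := by
    have hunion : μ (⋃ σ : Equiv.Perm (Fin n), {ω | J ω = ⇑σ}) = 1 := by
      rw [measure_iUnion]
      · rw [tsum_fintype]
        rw [Finset.sum_congr rfl (fun σ _ => hunif _ σ.bijective), Finset.sum_const,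
          Finset.card_univ, nsmul_eq_mul]
        rw [ENNReal.mul_inv_cancel] <;>
          simp [hcard, Nat.factorial_ne_zero]
      · intro σ τ hst
        simp only [Set.disjoint_left, Set.mem_setOf_eq]
        intro ω h1 h2
        exact hst (Equiv.coe_fn_injective (h1.symm.trans h2))
      · exact fun σ => hms _
    have hsub : {ω | ¬ Function.Bijective (J ω)}
        ⊆ (⋃ σ : Equiv.Perm (Fin n), {ω | J ω = ⇑σ})ᶜ := by
      intro ω hω
      simp only [Set.mem_compl_iff, Set.mem_iUnion, Set.mem_setOf_eq, not_exists]
      intro σ hσ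
      exact hω (hσ ▸ σ.bijective)
    refine measure_mono_null hsub ?_
    rw [measure_compl (MeasurableSet.iUnion fun σ => hms _) (measure_ne_top μ _), hunion]
    simp
  have hzero : ∀ g : Fin n → Fin n, ¬ Function.Bijective g → μ {ω | J ω = g} = 0 := by
    intro g hg
    refine measure_mono_null ?_ hU
    intro ω hω
    simp only [Set.mem_setOf_eq] at hω ⊢
    rw [hω]; exact hg
  -- reduce integrals to sums over permutations
  have key : ∀ f : (Fin n → Fin n) → ℝ,
      ∫ ω, f (J ω) ∂μ = (n.factorial : ℝ)⁻¹ * ∑ σ : Equiv.Perm (Fin n), f ⇑σ := by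
    intro f
    have hpt : ∀ ω, f (J ω)
        = ∑ g : Fin n → Fin n, Set.indicator {ω' | J ω' = g} (fun _ => f g) ω := by
      intro ω
      rw [Finset.sum_eq_single (J ω)]
      · exact (Set.indicator_of_mem rfl _).symm
      · intro g _ hg
        apply Set.indicator_of_notMem
        simp only [Set.mem_setOf_eq]
        exact fun h => hg h.symm
      · intro h; exact absurd (Finset.mem_univ _) h
    let e : Equiv.Perm (Fin n) ↪ (Fin n → Fin n) := ⟨fun σ => ⇑σ, Equiv.coe_fn_injective⟩
    calc ∫ ω, f (J ω) ∂μ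
        = ∑ g : Fin n → Fin n, ∫ ω, Set.indicator {ω' | J ω' = g} (fun _ => f g) ω ∂μ := by
          rw [show (fun ω => f (J ω))
              = (fun ω => ∑ g : Fin n → Fin n,
                  Set.indicator {ω' | J ω' = g} (fun _ => f g) ω) from funext hpt]
          exact integral_finset_sum _ (fun g _ => (integrable_const (f g)).indicator (hms g))
      _ = ∑ g : Fin n → Fin n, (μ {ω' | J ω' = g}).toReal * f g := by
          refine Finset.sum_congr rfl fun g _ => ?_
          rw [integral_indicator_const _ (hms g), smul_eq_mul]
          rfl
      _ = ∑ σ : Equiv.Perm (Fin n), (μ {ω' | J ω' = ⇑σ}).toReal * f ⇑σ := by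
          have h1 : (∑ σ : Equiv.Perm (Fin n), (μ {ω' | J ω' = ⇑σ}).toReal * f ⇑σ)
              = ∑ g ∈ Finset.univ.map e, (μ {ω' | J ω' = g}).toReal * f g := by
            rw [Finset.sum_map]
            rfl
          rw [h1]
          refine (Finset.sum_subset (Finset.subset_univ _) ?_).symm
          intro g _ hg
          have hnb : ¬ Function.Bijective g := by
            intro hb
            exact hg (Finset.mem_map.mpr ⟨Equiv.ofBijective g hb, Finset.mem_univ _, rfl⟩)
          rw [hzero g hnb]; simp
      _ = ∑ σ : Equiv.Perm (Fin n), (n.factorial : ℝ)⁻¹ * f ⇑σ := by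
          refine Finset.sum_congr rfl fun σ _ => ?_
          rw [hunif _ σ.bijective, ENNReal.toReal_inv]
          simp [hcard]
      _ = (n.factorial : ℝ)⁻¹ * ∑ σ : Equiv.Perm (Fin n), f ⇑σ := by
          rw [Finset.mul_sum]
  -- combinatorics over permutations
  set C : ℝ := ∑ σ : Equiv.Perm (Fin n), ‖φ (σ z)‖ ^ 2 with hCdef
  set S : ℝ := ∑ i, ‖φ i‖ ^ 2 with hSdef
  have hreindex : ∀ (π : Equiv.Perm (Fin n)) (G : Equiv.Perm (Fin n) → ℝ),
      (∑ σ : Equiv.Perm (Fin n), G (σ * π)) = ∑ σ : Equiv.Perm (Fin n), G σ :=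
    fun π G => Equiv.sum_comp (Equiv.mulRight π) G
  have hrow : ∀ r : Fin n, (∑ σ : Equiv.Perm (Fin n), ‖φ (σ r)‖ ^ 2) = C := by
    intro r
    have h := hreindex (Equiv.swap z r) (fun σ => ‖φ (σ z)‖ ^ 2)
    simpa [Equiv.Perm.mul_apply, Equiv.swap_apply_left] using h
  have hC_nonneg : 0 ≤ C := Finset.sum_nonneg fun σ _ => sq_nonneg _
  have hsum0 : ∀ σ : Equiv.Perm (Fin n), (∑ s : Fin n, φ (σ s)) = 0 := by
    intro σ; rw [Equiv.sum_comp σ φ]; exact hφ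
  set E : Fin n → Fin n → ℝ :=
    fun r s => ∑ σ : Equiv.Perm (Fin n), (inner ℝ (φ (σ r)) (φ (σ s)) : ℝ) with hEdef
  have hE_total : ∀ r : Fin n, (∑ s ∈ Finset.univ.erase r, E r s) = -C := by
    intro r
    calc (∑ s ∈ Finset.univ.erase r, ∑ σ : Equiv.Perm (Fin n),
            (inner ℝ (φ (σ r)) (φ (σ s)) : ℝ))
        = ∑ σ : Equiv.Perm (Fin n), ∑ s ∈ Finset.univ.erase r,
            (inner ℝ (φ (σ r)) (φ (σ s)) : ℝ) := Finset.sum_comm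
      _ = ∑ σ : Equiv.Perm (Fin n), -(‖φ (σ r)‖ ^ 2) := by
          refine Finset.sum_congr rfl fun σ _ => ?_
          rw [← inner_sum, Finset.sum_erase_eq_sub (Finset.mem_univ r), hsum0 σ,
            zero_sub, inner_neg_right, real_inner_self_eq_norm_sq]
      _ = -C := by rw [Finset.sum_neg_distrib, hrow r]
  have hE_swap : ∀ r s s' : Fin n, s ≠ r → s' ≠ r → E r s = E r s' := by
    intro r s s' hs hs'
    have h := hreindex (Equiv.swap s s') (fun σ => (inner ℝ (φ (σ r)) (φ (σ s')) : ℝ))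
    simpa [Equiv.Perm.mul_apply, Equiv.swap_apply_right,
      Equiv.swap_apply_of_ne_of_ne hs.symm hs'.symm] using h
  have hE_nonpos : ∀ r s : Fin n, s ≠ r → E r s ≤ 0 := by
    intro r s hs
    have htot := hE_total r
    have hconst : (∑ s' ∈ Finset.univ.erase r, E r s') = ((n : ℝ) - 1) * E r s := by
      rw [Finset.sum_congr rfl
        (fun s' hs' => hE_swap r s' s (Finset.ne_of_mem_erase hs') hs)]
      rw [Finset.sum_const, Finset.card_erase_of_mem (Finset.mem_univ r),
        Finset.card_univ, Fintype.card_fin, nsmul_eq_mul]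
      have : ((n - 1 : ℕ) : ℝ) = (n : ℝ) - 1 := by
        have : 1 ≤ n := hn
        push_cast [this]; ring
      rw [this]
    have hn2 : 2 ≤ n := by
      have : Nontrivial (Fin n) := ⟨s, r, hs⟩
      have h1 := Fintype.one_lt_card (α := Fin n)
      simp at h1
      omega
    have hn2' : (2 : ℝ) ≤ (n : ℝ) := by exact_mod_cast hn2
    rw [hconst] at htot
    nlinarith [hC_nonneg]
  -- the main combinatorial inequality
  have hmain : (∑ σ : Equiv.Perm (Fin n), ‖∑ r ∈ T, φ (σ r)‖ ^ 2) ≤ (ℓ : ℝ) * C := by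
    have hexp : ∀ σ : Equiv.Perm (Fin n), ‖∑ r ∈ T, φ (σ r)‖ ^ 2
        = (∑ r ∈ T, ‖φ (σ r)‖ ^ 2)
          + ∑ r ∈ T, ∑ s ∈ T.erase r, (inner ℝ (φ (σ r)) (φ (σ s)) : ℝ) := by
      intro σ
      rw [← real_inner_self_eq_norm_sq, sum_inner, ← Finset.sum_add_distrib]
      refine Finset.sum_congr rfl fun r hr => ?_
      rw [inner_sum, ← Finset.add_sum_erase _ _ hr, real_inner_self_eq_norm_sq]
    rw [Finset.sum_congr rfl fun σ _ => hexp σ, Finset.sum_add_distrib]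
    have h1 : (∑ σ : Equiv.Perm (Fin n), ∑ r ∈ T, ‖φ (σ r)‖ ^ 2) = (ℓ : ℝ) * C := by
      rw [Finset.sum_comm, Finset.sum_congr rfl fun r _ => hrow r, Finset.sum_const,
        hTcard, nsmul_eq_mul]
    have h2 : (∑ σ : Equiv.Perm (Fin n), ∑ r ∈ T, ∑ s ∈ T.erase r,
        (inner ℝ (φ (σ r)) (φ (σ s)) : ℝ)) ≤ 0 := by
      rw [Finset.sum_comm]
      refine Finset.sum_nonpos fun r _ => ?_
      rw [Finset.sum_comm]
      exact Finset.sum_nonpos fun s hs => hE_nonpos r s (Finset.ne_of_mem_erase hs)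
    linarith
  -- the equality `n * C = n! * S`
  have hnC : (n : ℝ) * C = (n.factorial : ℝ) * S := by
    have h1 : (∑ r : Fin n, ∑ σ : Equiv.Perm (Fin n), ‖φ (σ r)‖ ^ 2) = (n : ℝ) * C := by
      rw [Finset.sum_congr rfl fun r _ => hrow r, Finset.sum_const, Finset.card_univ,
        Fintype.card_fin, nsmul_eq_mul]
    rw [← h1, Finset.sum_comm,
      Finset.sum_congr rfl fun σ _ => Equiv.sum_comp σ (fun i => ‖φ i‖ ^ 2),
      Finset.sum_const, Finset.card_univ, hcard, nsmul_eq_mul]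
  have hI1 : ∫ ω, ‖∑ r ∈ T, φ (J ω r)‖ ^ 2 ∂μ
      = (n.factorial : ℝ)⁻¹ * ∑ σ : Equiv.Perm (Fin n), ‖∑ r ∈ T, φ (σ r)‖ ^ 2 :=
    key (fun g => ‖∑ r ∈ T, φ (g r)‖ ^ 2)
  have hI2 : ∫ ω, ‖φ (J ω z)‖ ^ 2 ∂μ = (n.factorial : ℝ)⁻¹ * C :=
    key (fun g => ‖φ (g z)‖ ^ 2)
  have hfac_pos : (0 : ℝ) < (n.factorial : ℝ) := by
    exact_mod_cast n.factorial_pos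
  constructor
  · rw [hI1, hI2]
    calc (n.factorial : ℝ)⁻¹ * ∑ σ : Equiv.Perm (Fin n), ‖∑ r ∈ T, φ (σ r)‖ ^ 2
        ≤ (n.factorial : ℝ)⁻¹ * ((ℓ : ℝ) * C) := by
          exact mul_le_mul_of_nonneg_left hmain (by positivity)
      _ = (ℓ : ℝ) * ((n.factorial : ℝ)⁻¹ * C) := by ring
  · rw [hI2]
    have hnne : (n : ℝ) ≠ 0 := by positivity
    field_simp
    nlinarith [hnC]
end

section
/- Let B be a symmetric positive definite q×q real matrix. For every s in the domain S of g, every γ > 0, every H, h ∈ ℝ^q and every β > 0, writing p_H := prox_{γg}^B(s + γH) and p_h := prox_{γg}^B(s + γh), one has: g(p_H) ≤ g(s) − γ⁻¹ (1 − β/4) ‖p_h − s‖_B² − γ⁻¹ (1 − 1/β) ‖p_h − p_H‖_B² − ⟨h, s − p_h⟩_B + ⟨H, p_H − p_h⟩_B. -/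
open scoped RealInnerProductSpace BigOperators

variable {q : ℕ}

/-- The action of a `q × q` real matrix on `EuclideanSpace ℝ (Fin q)`. -/
noncomputable def mulVecE (B : Matrix (Fin q) (Fin q) ℝ) (x : EuclideanSpace ℝ (Fin q)) :
    EuclideanSpace ℝ (Fin q) :=
  (EuclideanSpace.equiv (Fin q) ℝ).symm (B.mulVec (EuclideanSpace.equiv (Fin q) ℝ x))

/-- The `B`-inner product `⟨x, y⟩_B := ⟨B x, y⟩`. -/
noncomputable def binner (B : Matrix (Fin q) (Fin q) ℝ) (x y : EuclideanSpace ℝ (Fin q)) : ℝ :=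
  ⟪mulVecE B x, y⟫

/-- The squared `B`-norm `‖x‖_B² := ⟨B x, x⟩`. -/
noncomputable def bnormSq (B : Matrix (Fin q) (Fin q) ℝ) (x : EuclideanSpace ℝ (Fin q)) : ℝ :=
  binner B x x

/-- `g : ℝ^q → (−∞, +∞]` is proper, lower semicontinuous and convex. -/
def ProperLscConvex (g : EuclideanSpace ℝ (Fin q) → EReal) : Prop :=
  (∀ x, g x ≠ ⊥) ∧ (∃ x, g x ≠ ⊤) ∧ LowerSemicontinuous g ∧
    ∀ x y : EuclideanSpace ℝ (Fin q), ∀ a b : ℝ, 0 ≤ a → 0 ≤ b → a + b = 1 →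
      g (a • x + b • y) ≤ (a : EReal) * g x + (b : EReal) * g y

/-- The objective function `x ↦ γ g(x) + (1/2) ‖x − s‖_B²` defining the
variable-metric proximity operator. -/
noncomputable def proxObj (γ : ℝ) (B : Matrix (Fin q) (Fin q) ℝ)
    (g : EuclideanSpace ℝ (Fin q) → EReal) (s x : EuclideanSpace ℝ (Fin q)) : EReal :=
  (γ : EReal) * g x + ((2⁻¹ * bnormSq B (x - s) : ℝ) : EReal)

/-- `p = prox_{γ g}^B (s)`, i.e. `p` minimizes `x ↦ γ g(x) + (1/2) ‖x − s‖_B²` over `ℝ^q`. -/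
def IsProx (γ : ℝ) (B : Matrix (Fin q) (Fin q) ℝ)
    (g : EuclideanSpace ℝ (Fin q) → EReal) (s p : EuclideanSpace ℝ (Fin q)) : Prop :=
  ∀ x, proxObj γ B g s p ≤ proxObj γ B g s x

/-- `u ∈ ∂g(p)`, the convex subdifferential of `g` at `p`. -/
def InSubdiff (g : EuclideanSpace ℝ (Fin q) → EReal) (p u : EuclideanSpace ℝ (Fin q)) : Prop :=
  ∀ x, g p + ((⟪u, x - p⟫ : ℝ) : EReal) ≤ g x

-- auxiliary lemmas
lemma binner_eq (B : Matrix (Fin q) (Fin q) ℝ) (x y : EuclideanSpace ℝ (Fin q)) :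
    binner B x y = dotProduct (B.mulVec x) y := by
  simp [binner, mulVecE, EuclideanSpace.inner_eq_star_dotProduct, dotProduct, mul_comm]
  exact Finset.sum_congr rfl fun i _ => mul_comm _ _

lemma binner_comm {B : Matrix (Fin q) (Fin q) ℝ} (hB : B.IsHermitian)
    (x y : EuclideanSpace ℝ (Fin q)) : binner B x y = binner B y x := by
  rw [binner_eq, binner_eq, dotProduct_comm, Matrix.dotProduct_mulVec,
    ← Matrix.mulVec_transpose]
  congr 1
  rw [← Matrix.conjTranspose_eq_transpose_of_trivial, hB.eq]

lemma bnormSq_nonneg {B : Matrix (Fin q) (Fin q) ℝ} (hB : B.PosDef)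
    (x : EuclideanSpace ℝ (Fin q)) : 0 ≤ bnormSq B x := by
  rcases eq_or_ne x 0 with rfl | hx
  · simp [bnormSq, binner_eq]
  · have := hB.dotProduct_mulVec_pos (x := x) (by intro hc; apply hx; ext i; exact congrFun hc i)
    rw [bnormSq, binner_eq, dotProduct_comm]
    simpa using this.le

lemma mulVecE_add (B : Matrix (Fin q) (Fin q) ℝ) (x y : EuclideanSpace ℝ (Fin q)) :
    mulVecE B (x + y) = mulVecE B x + mulVecE B y := by
  ext i; simp [mulVecE, Matrix.mulVec_add]

lemma mulVecE_smul (B : Matrix (Fin q) (Fin q) ℝ) (c : ℝ) (x : EuclideanSpace ℝ (Fin q)) :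
    mulVecE B (c • x) = c • mulVecE B x := by
  ext i; simp [mulVecE, Matrix.mulVec_smul]

lemma binner_add_left (B : Matrix (Fin q) (Fin q) ℝ) (x x' y : EuclideanSpace ℝ (Fin q)) :
    binner B (x + x') y = binner B x y + binner B x' y := by
  rw [binner, mulVecE_add, inner_add_left]; rfl

lemma binner_add_right (B : Matrix (Fin q) (Fin q) ℝ) (x y y' : EuclideanSpace ℝ (Fin q)) :
    binner B x (y + y') = binner B x y + binner B x y' := by
  rw [binner, inner_add_right]; rfl

lemma binner_smul_left (B : Matrix (Fin q) (Fin q) ℝ) (c : ℝ) (x y : EuclideanSpace ℝ (Fin q)) :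
    binner B (c • x) y = c * binner B x y := by
  rw [binner, mulVecE_smul, real_inner_smul_left]; rfl

lemma binner_smul_right (B : Matrix (Fin q) (Fin q) ℝ) (c : ℝ) (x y : EuclideanSpace ℝ (Fin q)) :
    binner B x (c • y) = c * binner B x y := by
  rw [binner, real_inner_smul_right]; rfl

lemma binner_sub_left (B : Matrix (Fin q) (Fin q) ℝ) (x x' y : EuclideanSpace ℝ (Fin q)) :
    binner B (x - x') y = binner B x y - binner B x' y := by
  have : x - x' = x + (-1 : ℝ) • x' := by module
  rw [this, binner_add_left, binner_smul_left]; ring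

lemma binner_sub_right (B : Matrix (Fin q) (Fin q) ℝ) (x y y' : EuclideanSpace ℝ (Fin q)) :
    binner B x (y - y') = binner B x y - binner B x y' := by
  have : y - y' = y + (-1 : ℝ) • y' := by module
  rw [this, binner_add_right, binner_smul_right]; ring

lemma proxObj_real {γ : ℝ} {B : Matrix (Fin q) (Fin q) ℝ}
    {g : EuclideanSpace ℝ (Fin q) → EReal} {s x : EuclideanSpace ℝ (Fin q)}
    (r : ℝ) (hr : g x = (r : EReal)) :
    proxObj γ B g s x = ((γ * r + 2⁻¹ * bnormSq B (x - s) : ℝ) : EReal) := by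
  rw [proxObj, hr]
  norm_cast

lemma isProx_finite {g : EuclideanSpace ℝ (Fin q) → EReal} (hg : ProperLscConvex g)
    {γ : ℝ} (hγ : 0 < γ) {B : Matrix (Fin q) (Fin q) ℝ} {c p : EuclideanSpace ℝ (Fin q)}
    (hp : IsProx γ B g c p) {x0 : EuclideanSpace ℝ (Fin q)} {r0 : ℝ} (h0 : g x0 = (r0 : EReal)) :
    ∃ r : ℝ, g p = (r : EReal) := by
  have h := hp x0
  rw [proxObj_real r0 h0] at h
  have hbot := hg.1 p
  have htop : g p ≠ ⊤ := by
    intro hc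
    rw [proxObj, hc, EReal.coe_mul_top_of_pos (by exact_mod_cast hγ),
      EReal.top_add_coe] at h
    exact (EReal.coe_lt_top _).not_ge h
  exact ⟨(g p).toReal, (EReal.coe_toReal htop hbot).symm⟩

lemma prox_strong {g : EuclideanSpace ℝ (Fin q) → EReal} (hg : ProperLscConvex g)
    {γ : ℝ} (hγ : 0 < γ) {B : Matrix (Fin q) (Fin q) ℝ} (hB : B.PosDef)
    {c p x : EuclideanSpace ℝ (Fin q)} (hp : IsProx γ B g c p)
    {gp gx : ℝ} (hgp : g p = (gp : EReal)) (hgx : g x = (gx : EReal)) :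
    γ * gp + 2⁻¹ * bnormSq B (p - c) + 2⁻¹ * bnormSq B (x - p)
      ≤ γ * gx + 2⁻¹ * bnormSq B (x - c) := by
  set K := 2⁻¹ * bnormSq B (x - p) with hKdef
  have hK : 0 ≤ K := mul_nonneg (by norm_num) (bnormSq_nonneg hB _)
  set L := γ * gp + 2⁻¹ * bnormSq B (p - c) with hL
  set R := γ * gx + 2⁻¹ * bnormSq B (x - c) with hR
  have main : ∀ t : ℝ, 0 < t → t ≤ 1 → L + (1 - t) * K ≤ R := by
    intro t ht ht1
    rw [hL, hR]
    set z := (1 - t) • p + t • x with hz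
    have hconv := hg.2.2.2 p x (1 - t) t (by linarith) ht.le (by ring)
    rw [hgp, hgx] at hconv
    have hconv' : g z ≤ (((1 - t) * gp + t * gx : ℝ) : EReal) := by
      refine hconv.trans_eq ?_
      norm_cast
    have hbot := hg.1 z
    have htopz : g z ≠ ⊤ := by
      intro hcz; rw [hcz] at hconv'; exact (EReal.coe_lt_top _).not_ge hconv'
    set rz : ℝ := (g z).toReal with hrzdef
    have hrz : g z = (rz : EReal) := (EReal.coe_toReal htopz hbot).symm
    have hrz' : rz ≤ (1 - t) * gp + t * gx := by
      rw [hrz] at hconv'; exact EReal.coe_le_coe_iff.mp hconv'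
    have h := hp z
    rw [proxObj_real gp hgp, proxObj_real rz hrz, EReal.coe_le_coe_iff] at h
    have hid : bnormSq B (z - c)
        = (1 - t) * bnormSq B (p - c) + t * bnormSq B (x - c)
          - t * (1 - t) * bnormSq B (x - p) := by
      have hzc : z - c = (1 - t) • (p - c) + t • (x - c) := by rw [hz]; module
      have hxp : x - p = (x - c) - (p - c) := by abel
      rw [hzc, hxp]
      simp only [bnormSq, binner_add_left, binner_add_right, binner_smul_left,
        binner_smul_right, binner_sub_left, binner_sub_right]
      ring
    rw [hid] at h
    have hmul := mul_le_mul_of_nonneg_left hrz' hγ.le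
    have ht' : t * (γ * gp + 2⁻¹ * bnormSq B (p - c) + (1 - t) * K)
        ≤ t * (γ * gx + 2⁻¹ * bnormSq B (x - c)) := by
      rw [hKdef]; nlinarith [h, hmul]
    exact le_of_mul_le_mul_left ht' ht
  by_contra hcon
  push_neg at hcon
  have hε : 0 < L + K - R := by linarith
  set ε := L + K - R with hεd
  have h2K : (0:ℝ) < 2 * K + 1 := by linarith
  set t : ℝ := min 1 (ε / (2 * K + 1)) with htd
  have ht : 0 < t := lt_min one_pos (div_pos hε h2K)
  have ht1 : t ≤ 1 := min_le_left _ _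
  have hm := main t ht ht1
  have htK : t * K < ε := by
    have h1 : t * K ≤ (ε / (2 * K + 1)) * K :=
      mul_le_mul_of_nonneg_right (min_le_right _ _) hK
    have h2 : (ε / (2 * K + 1)) * K < ε := by
      rw [div_mul_eq_mul_div, div_lt_iff₀ h2K]; nlinarith
    linarith
  have : L + K ≤ R + t * K := by linarith
  linarith

/-- For `s` in the domain of `g`, `γ > 0`, `H, h ∈ ℝ^q` and `β > 0`,
writing `p_H := prox_{γ g}^B (s + γ H)` and `p_h := prox_{γ g}^B (s + γ h)`:
`g(p_H) ≤ g(s) − γ⁻¹(1 − β/4)‖p_h − s‖_B² − γ⁻¹(1 − 1/β)‖p_h − p_H‖_B²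
          − ⟨h, s − p_h⟩_B + ⟨H, p_H − p_h⟩_B`. -/
theorem prox_descent_inequality_for_g
    {q : ℕ} (g : EuclideanSpace ℝ (Fin q) → EReal) (hg : ProperLscConvex g)
    (B : Matrix (Fin q) (Fin q) ℝ) (hB : B.PosDef)
    (s : EuclideanSpace ℝ (Fin q)) (hs : g s < ⊤)
    (γ : ℝ) (hγ : 0 < γ) (H h : EuclideanSpace ℝ (Fin q)) (β : ℝ) (hβ : 0 < β)
    (pH ph : EuclideanSpace ℝ (Fin q))
    (hpH : IsProx γ B g (s + γ • H) pH) (hph : IsProx γ B g (s + γ • h) ph) :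
    g pH ≤ g s +
      ((- γ⁻¹ * (1 - β / 4) * bnormSq B (ph - s)
        - γ⁻¹ * (1 - 1 / β) * bnormSq B (ph - pH)
        - binner B h (s - ph) + binner B H (pH - ph) : ℝ) : EReal) := by
  -- real values
  have hsbot := hg.1 s
  have hstop : g s ≠ ⊤ := hs.ne
  set a : ℝ := (g s).toReal with had
  have ha : g s = (a : EReal) := (EReal.coe_toReal hstop hsbot).symm
  obtain ⟨bH, hbH⟩ := isProx_finite hg hγ hpH ha
  obtain ⟨bh, hbh⟩ := isProx_finite hg hγ hph ha
  -- two strong prox inequalities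
  have ineq1 := prox_strong hg hγ hB hpH hbH hbh
  have ineq2 := prox_strong hg hγ hB hph hbh ha
  -- Young-type inequality
  have h3 := bnormSq_nonneg hB ((β / 2) • (ph - s) + (pH - ph))
  have hkey : 0 ≤ β / 4 * bnormSq B (ph - s)
      + 2⁻¹ * binner B (ph - s) (pH - ph) + 2⁻¹ * binner B (pH - ph) (ph - s)
      + (1 / β) * bnormSq B (pH - ph) := by
    rw [← mul_le_mul_iff_right₀ hβ, mul_zero]
    have hexp : β * (β / 4 * bnormSq B (ph - s)
        + 2⁻¹ * binner B (ph - s) (pH - ph) + 2⁻¹ * binner B (pH - ph) (ph - s)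
        + (1 / β) * bnormSq B (pH - ph))
        = bnormSq B ((β / 2) • (ph - s) + (pH - ph)) := by
      simp only [bnormSq, binner_add_left, binner_add_right, binner_smul_left,
        binner_smul_right]
      field_simp
      ring
    rw [hexp]
    positivity
  -- reduce goal to reals
  rw [ha, hbH, ← EReal.coe_add, EReal.coe_le_coe_iff]
  -- multiply by γ
  rw [← mul_le_mul_iff_right₀ hγ]
  have hγ0 : γ ≠ 0 := ne_of_gt hγ
  have hexp2 : γ * (a + (- γ⁻¹ * (1 - β / 4) * bnormSq B (ph - s)
        - γ⁻¹ * (1 - 1 / β) * bnormSq B (ph - pH)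
        - binner B h (s - ph) + binner B H (pH - ph)))
      = γ * a - (1 - β / 4) * bnormSq B (ph - s) - (1 - 1 / β) * bnormSq B (ph - pH)
        - γ * binner B h (s - ph) + γ * binner B H (pH - ph) := by
    field_simp
    ring
  rw [hexp2]
  -- symmetry facts
  have c1 := binner_comm hB.1 H pH
  have c2 := binner_comm hB.1 H ph
  have c3 := binner_comm hB.1 H s
  have c4 := binner_comm hB.1 h pH
  have c5 := binner_comm hB.1 h ph
  have c6 := binner_comm hB.1 h s
  have c7 := binner_comm hB.1 pH ph
  have c8 := binner_comm hB.1 pH s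
  have c9 := binner_comm hB.1 ph s
  have c10 := binner_comm hB.1 H h
  simp only [bnormSq, binner_add_left, binner_add_right, binner_smul_left,
    binner_smul_right, binner_sub_left, binner_sub_right] at ineq1 ineq2 hkey ⊢
  simp only [c1, c2, c3, c4, c5, c6, c7, c8, c9, c10] at ineq1 ineq2 hkey ⊢
  linarith [ineq1, ineq2, hkey]
end

section
/- Let d ∈ ℕ*, σ > 0, y ∈ {−1, 1}, X ∈ ℝ^d with X ≠ 0, and θ ∈ ℝ^d. Then ∫_{ℝ^d} (1 + exp(−y ⟨X, z⟩))⁻¹ exp(−‖z − θ‖²/(2σ²)) dz = (2πσ²)^{(d−1)/2} exp( −⟨X, θ⟩² / (2σ² ‖X‖²) ) ∫_ℝ (1 + exp(−y ‖X‖ x))⁻¹ exp( x ⟨X, θ⟩ / (σ² ‖X‖) − x²/(2σ²) ) dx. -/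
open scoped RealInnerProductSpace
open Real MeasureTheory

/-- Reduction of the `d`-dimensional Gaussian–logistic integral to a
one-dimensional integral:
`∫_{ℝ^d} (1 + e^{−y⟨X,z⟩})⁻¹ e^{−‖z−θ‖²/(2σ²)} dz
  = (2πσ²)^{(d−1)/2} e^{−⟨X,θ⟩²/(2σ²‖X‖²)}
    ∫_ℝ (1 + e^{−y‖X‖x})⁻¹ e^{x⟨X,θ⟩/(σ²‖X‖) − x²/(2σ²)} dx`. -/
theorem gaussian_logistic_integral_reduction
    (d : ℕ) (hd : 0 < d) (σ : ℝ) (hσ : 0 < σ) (y : ℝ) (hy : y = 1 ∨ y = -1)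
    (X θ : EuclideanSpace ℝ (Fin d)) (hX : X ≠ 0) :
    ∫ z : EuclideanSpace ℝ (Fin d),
        (1 + Real.exp (-y * ⟪X, z⟫))⁻¹ * Real.exp (-‖z - θ‖ ^ 2 / (2 * σ ^ 2))
      = (2 * π * σ ^ 2) ^ (((d : ℝ) - 1) / 2) *
          Real.exp (-⟪X, θ⟫ ^ 2 / (2 * σ ^ 2 * ‖X‖ ^ 2)) *
          ∫ x : ℝ, (1 + Real.exp (-y * ‖X‖ * x))⁻¹ *
            Real.exp (x * ⟪X, θ⟫ / (σ ^ 2 * ‖X‖) - x ^ 2 / (2 * σ ^ 2)) := by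
  have hXn : (0:ℝ) < ‖X‖ := norm_pos_iff.mpr hX
  have h2σ : (0:ℝ) < 2 * σ ^ 2 := by positivity
  have hc : (0:ℝ) < 2 * π * σ ^ 2 := by positivity
  set z0 : Fin d := ⟨0, hd⟩ with hz0
  have gauss : ∀ c : ℝ, ∫ x : ℝ, Real.exp (-(x - c) ^ 2 / (2 * σ ^ 2))
      = Real.sqrt (2 * π * σ ^ 2) := by
    intro c
    have h : ∀ x : ℝ, Real.exp (-(x - c) ^ 2 / (2 * σ ^ 2))
        = (fun u : ℝ => Real.exp (-(1 / (2 * σ ^ 2)) * u ^ 2)) (x - c) := by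
      intro x; simp only; congr 1; field_simp
    simp_rw [h]
    rw [integral_sub_right_eq_self (μ := volume)
      (fun u : ℝ => Real.exp (-(1 / (2 * σ ^ 2)) * u ^ 2)) c, integral_gaussian]
    congr 1
    field_simp
  have hv : Orthonormal ℝ (({z0} : Set (Fin d)).restrict
      (fun _ : Fin d => (‖X‖⁻¹ : ℝ) • X)) := by
    constructor
    · intro i
      show ‖(‖X‖⁻¹ : ℝ) • X‖ = 1
      rw [norm_smul, Real.norm_eq_abs, abs_of_pos (inv_pos.mpr hXn),
        inv_mul_cancel₀ hXn.ne']
    · intro i j hij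
      exact absurd (Subtype.ext ((Set.mem_singleton_iff.mp i.2).trans
        (Set.mem_singleton_iff.mp j.2).symm)) hij
  obtain ⟨b, hb⟩ := hv.exists_orthonormalBasis_extension_of_card_eq (by simp)
  have hb0 : b z0 = (‖X‖⁻¹ : ℝ) • X := hb z0 rfl
  have hXb : ∀ z : EuclideanSpace ℝ (Fin d), ⟪X, z⟫ = ‖X‖ * b.repr z z0 := by
    intro z
    have hXeq : X = (‖X‖ : ℝ) • b z0 := by
      rw [hb0, smul_smul, mul_inv_cancel₀ hXn.ne', one_smul]
    rw [b.repr_apply_apply]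
    conv_lhs => rw [hXeq]
    rw [real_inner_smul_left]
  set a : ℝ := b.repr θ z0 with ha_def
  have ha : a = ⟪X, θ⟫ / ‖X‖ := by
    rw [ha_def, b.repr_apply_apply, hb0, real_inner_smul_left, div_eq_inv_mul]
  set g : Fin d → ℝ → ℝ := fun i x =>
    (if i = z0 then (1 + Real.exp (-y * (‖X‖ * x)))⁻¹ else 1) *
      Real.exp (-(x - b.repr θ i) ^ 2 / (2 * σ ^ 2)) with hg
  -- step 1 : change variables by b.repr
  have h1 : (∫ z : EuclideanSpace ℝ (Fin d),
        (1 + Real.exp (-y * ⟪X, z⟫))⁻¹ * Real.exp (-‖z - θ‖ ^ 2 / (2 * σ ^ 2)))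
      = ∫ w : EuclideanSpace ℝ (Fin d),
          (1 + Real.exp (-y * (‖X‖ * w z0)))⁻¹ *
            Real.exp (-‖w - b.repr θ‖ ^ 2 / (2 * σ ^ 2)) := by
    calc (∫ z : EuclideanSpace ℝ (Fin d),
          (1 + Real.exp (-y * ⟪X, z⟫))⁻¹ * Real.exp (-‖z - θ‖ ^ 2 / (2 * σ ^ 2)))
        = ∫ z : EuclideanSpace ℝ (Fin d),
            (fun w : EuclideanSpace ℝ (Fin d) =>
              (1 + Real.exp (-y * (‖X‖ * w z0)))⁻¹ *
                Real.exp (-‖w - b.repr θ‖ ^ 2 / (2 * σ ^ 2))) (b.repr z) := by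
          refine integral_congr_ae (Filter.Eventually.of_forall fun z => ?_)
          simp only
          rw [hXb z, ← LinearIsometryEquiv.map_sub, LinearIsometryEquiv.norm_map]
      _ = _ := b.measurePreserving_repr.integral_comp
            b.repr.toHomeomorph.measurableEmbedding
            (fun w : EuclideanSpace ℝ (Fin d) =>
              (1 + Real.exp (-y * (‖X‖ * w z0)))⁻¹ *
                Real.exp (-‖w - b.repr θ‖ ^ 2 / (2 * σ ^ 2)))
  -- step 2 : pass to the product measure and factor the integrand
  have h2 : (∫ w : EuclideanSpace ℝ (Fin d),
        (1 + Real.exp (-y * (‖X‖ * w z0)))⁻¹ *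
          Real.exp (-‖w - b.repr θ‖ ^ 2 / (2 * σ ^ 2)))
      = ∏ i, ∫ x : ℝ, g i x := by
    calc (∫ w : EuclideanSpace ℝ (Fin d),
          (1 + Real.exp (-y * (‖X‖ * w z0)))⁻¹ *
            Real.exp (-‖w - b.repr θ‖ ^ 2 / (2 * σ ^ 2)))
        = ∫ w : EuclideanSpace ℝ (Fin d),
            (fun v : Fin d → ℝ => ∏ i, g i (v i))
              ((MeasurableEquiv.toLp 2 (Fin d → ℝ)).symm w) := by
          refine integral_congr_ae (Filter.Eventually.of_forall fun w => ?_)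
          show (1 + Real.exp (-y * (‖X‖ * w z0)))⁻¹ *
              Real.exp (-‖w - b.repr θ‖ ^ 2 / (2 * σ ^ 2)) = ∏ i, g i (w i)
          have hnorm : ‖w - b.repr θ‖ ^ 2 = ∑ i, (w i - b.repr θ i) ^ 2 := by
            rw [EuclideanSpace.norm_eq, Real.sq_sqrt (by positivity)]
            exact Finset.sum_congr rfl fun i _ => by
              rw [PiLp.sub_apply, Real.norm_eq_abs, sq_abs]
          simp only [hg, Finset.prod_mul_distrib]
          rw [Finset.prod_ite_eq']
          simp only [Finset.mem_univ, if_true]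
          rw [← Real.exp_sum, hnorm]
          congr 1
          rw [← Finset.sum_neg_distrib, Finset.sum_div]
      _ = ∫ v : Fin d → ℝ, ∏ i, g i (v i) :=
          (EuclideanSpace.volume_preserving_symm_measurableEquiv_toLp (Fin d)).integral_comp
            (MeasurableEquiv.toLp 2 (Fin d → ℝ)).symm.measurableEmbedding
            (fun v : Fin d → ℝ => ∏ i, g i (v i))
      _ = ∏ i, ∫ x : ℝ, g i x := MeasureTheory.integral_fintype_prod_eq_prod g
  -- step 3 : split off the z0 factor
  have h3 : (∏ i, ∫ x : ℝ, g i x)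
      = (∫ x : ℝ, (1 + Real.exp (-y * (‖X‖ * x)))⁻¹ *
            Real.exp (-(x - a) ^ 2 / (2 * σ ^ 2))) *
          Real.sqrt (2 * π * σ ^ 2) ^ (d - 1) := by
    have hz0int : (∫ x : ℝ, g z0 x)
        = ∫ x : ℝ, (1 + Real.exp (-y * (‖X‖ * x)))⁻¹ *
            Real.exp (-(x - a) ^ 2 / (2 * σ ^ 2)) := by
      simp only [hg, eq_self_iff_true, if_true, ha_def]
    have hconst : ∀ i ∈ Finset.univ.erase z0,
        (∫ x : ℝ, g i x) = Real.sqrt (2 * π * σ ^ 2) := by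
      intro i hi
      have hi' : i ≠ z0 := Finset.ne_of_mem_erase hi
      simp only [hg, hi', if_false, one_mul]
      exact gauss _
    rw [← Finset.mul_prod_erase Finset.univ _ (Finset.mem_univ z0), hz0int,
      Finset.prod_congr rfl hconst, Finset.prod_const,
      Finset.card_erase_of_mem (Finset.mem_univ z0), Finset.card_univ, Fintype.card_fin]
  -- step 4 : complete the square in the z0 factor
  have key : ∀ x : ℝ, (1 + Real.exp (-y * (‖X‖ * x)))⁻¹ *
        Real.exp (-(x - a) ^ 2 / (2 * σ ^ 2))
      = Real.exp (-a ^ 2 / (2 * σ ^ 2)) *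
          ((1 + Real.exp (-y * ‖X‖ * x))⁻¹ *
            Real.exp (x * ⟪X, θ⟫ / (σ ^ 2 * ‖X‖) - x ^ 2 / (2 * σ ^ 2))) := by
    intro x
    have e1 : -y * ‖X‖ * x = -y * (‖X‖ * x) := mul_assoc _ _ _
    rw [e1]
    conv_rhs => rw [mul_left_comm]
    congr 1
    rw [← Real.exp_add]
    congr 1
    rw [ha]
    field_simp
    ring
  have h4 : (∫ x : ℝ, (1 + Real.exp (-y * (‖X‖ * x)))⁻¹ *
        Real.exp (-(x - a) ^ 2 / (2 * σ ^ 2)))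
      = Real.exp (-a ^ 2 / (2 * σ ^ 2)) *
          ∫ x : ℝ, (1 + Real.exp (-y * ‖X‖ * x))⁻¹ *
            Real.exp (x * ⟪X, θ⟫ / (σ ^ 2 * ‖X‖) - x ^ 2 / (2 * σ ^ 2)) := by
    simp_rw [key]
    exact MeasureTheory.integral_const_mul _ _
  rw [h1, h2, h3, h4]
  have hpow : Real.sqrt (2 * π * σ ^ 2) ^ (d - 1)
      = (2 * π * σ ^ 2) ^ (((d : ℝ) - 1) / 2) := by
    rw [Real.sqrt_eq_rpow, ← Real.rpow_natCast ((2 * π * σ ^ 2) ^ (1 / (2:ℝ))) (d - 1),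
      ← Real.rpow_mul hc.le]
    congr 1
    rw [Nat.cast_sub hd, Nat.cast_one]
    ring
  have hexp : Real.exp (-a ^ 2 / (2 * σ ^ 2))
      = Real.exp (-⟪X, θ⟫ ^ 2 / (2 * σ ^ 2 * ‖X‖ ^ 2)) := by
    congr 1
    rw [ha]
    ring
  rw [hpow, hexp]
  ring
end

section
/- Let n, d ∈ ℕ*, σ > 0, τ > 0, and for each i ∈ {1,…,n} let X_i ∈ ℝ^d and y_i ∈ {−1, 1}. Define F(θ) := τ ‖θ‖² − n⁻¹ Σ_{i=1}^n log ∫_{ℝ^d} (1 + exp(−y_i ⟨X_i, z⟩))⁻¹ (2πσ²)^{−d/2} exp(−‖z − θ‖²/(2σ²)) dz for θ ∈ ℝ^d. Then every global minimizer θ⋆ of F over ℝ^d satisfies ‖θ⋆‖² ≤ (ln 4)/τ. -/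
open scoped RealInnerProductSpace
open Real MeasureTheory

section Aux

variable {d : ℕ}

private lemma gauss_integrable {σ : ℝ} (hσ : 0 < σ) :
    Integrable (fun z : EuclideanSpace ℝ (Fin d) =>
      (2 * π * σ ^ 2) ^ (-(d : ℝ) / 2) * Real.exp (-‖z‖ ^ 2 / (2 * σ ^ 2))) := by
  have hb : 0 < (2 * σ ^ 2)⁻¹ := by positivity
  have h : Integrable (fun z : EuclideanSpace ℝ (Fin d) =>
      Real.exp (-(2 * σ ^ 2)⁻¹ * ‖z‖ ^ 2)) := by
    have hbc : (0:ℝ) < (((2 * σ ^ 2)⁻¹ : ℝ) : ℂ).re := by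
      rw [Complex.ofReal_re]; exact hb
    have := (GaussianFourier.integrable_cexp_neg_mul_sq_norm_add
      (b := (((2 * σ ^ 2)⁻¹ : ℝ) : ℂ)) hbc 0 (0 : EuclideanSpace ℝ (Fin d))).norm
    convert this using 2 with z
    have harg : (-(((2 * σ ^ 2)⁻¹ : ℝ) : ℂ) * (‖z‖ : ℂ) ^ 2 +
        0 * ((⟪(0 : EuclideanSpace ℝ (Fin d)), z⟫ : ℝ) : ℂ))
        = ((-(2 * σ ^ 2)⁻¹ * ‖z‖ ^ 2 : ℝ) : ℂ) := by push_cast; ring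
    rw [harg, Complex.norm_exp, Complex.ofReal_re]
  have := h.const_mul ((2 * π * σ ^ 2) ^ (-(d : ℝ) / 2))
  convert this using 3 with z
  rw [neg_div, div_eq_inv_mul, neg_mul]

private lemma gauss_total {σ : ℝ} (hσ : 0 < σ) (hd : 0 < d) :
    (∫ z : EuclideanSpace ℝ (Fin d),
      (2 * π * σ ^ 2) ^ (-(d : ℝ) / 2) * Real.exp (-‖z‖ ^ 2 / (2 * σ ^ 2))) = 1 := by
  have hb : 0 < (2 * σ ^ 2)⁻¹ := by positivity
  have h := GaussianFourier.integral_rexp_neg_mul_sq_norm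
    (V := EuclideanSpace ℝ (Fin d)) hb
  have hrw : ∀ z : EuclideanSpace ℝ (Fin d),
      Real.exp (-‖z‖ ^ 2 / (2 * σ ^ 2)) = Real.exp (-(2 * σ ^ 2)⁻¹ * ‖z‖ ^ 2) := by
    intro z; rw [neg_div, div_eq_inv_mul, neg_mul]
  simp_rw [hrw]
  rw [integral_const_mul, h]
  have hfr : (Module.finrank ℝ (EuclideanSpace ℝ (Fin d)) : ℝ) = (d : ℝ) := by
    simp [finrank_euclideanSpace]
  rw [hfr]
  have h1 : π / (2 * σ ^ 2)⁻¹ = 2 * π * σ ^ 2 := by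
    field_simp
  rw [h1, ← Real.rpow_add (by positivity),
    show (-(d:ℝ)/2 + (d:ℝ)/2) = 0 by ring, Real.rpow_zero]

end Aux

/-- Every global minimizer of the ridge-penalized negative normalized
log-likelihood `F` of the logistic regression model with Gaussian random effects satisfies
`‖θ⋆‖² ≤ (ln 4)/τ`. -/
theorem minimizers_in_compact_set
    (n d : ℕ) (hn : 0 < n) (hd : 0 < d) (σ τ : ℝ) (hσ : 0 < σ) (hτ : 0 < τ)
    (X : Fin n → EuclideanSpace ℝ (Fin d)) (y : Fin n → ℝ)
    (hy : ∀ i, y i = 1 ∨ y i = -1)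
    (F : EuclideanSpace ℝ (Fin d) → ℝ)
    (hF : ∀ θ, F θ = τ * ‖θ‖ ^ 2 - (n : ℝ)⁻¹ * ∑ i, Real.log
      (∫ z : EuclideanSpace ℝ (Fin d),
        (1 + Real.exp (-(y i) * ⟪X i, z⟫))⁻¹ *
          ((2 * π * σ ^ 2) ^ (-(d : ℝ) / 2) * Real.exp (-‖z - θ‖ ^ 2 / (2 * σ ^ 2)))))
    (θstar : EuclideanSpace ℝ (Fin d)) (hmin : ∀ θ, F θstar ≤ F θ) :
    ‖θstar‖ ^ 2 ≤ Real.log 4 / τ := by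
  set ρ : EuclideanSpace ℝ (Fin d) → ℝ := fun z =>
    (2 * π * σ ^ 2) ^ (-(d : ℝ) / 2) * Real.exp (-‖z‖ ^ 2 / (2 * σ ^ 2)) with hρ
  have hρ_nonneg : ∀ z, 0 ≤ ρ z := fun z => by positivity
  have hρint : Integrable ρ := gauss_integrable hσ
  have hρtot : ∫ z : EuclideanSpace ℝ (Fin d), ρ z = 1 := gauss_total hσ hd
  have hρshift_int : ∀ θ : EuclideanSpace ℝ (Fin d),
      Integrable (fun z : EuclideanSpace ℝ (Fin d) => ρ (z - θ)) := fun θ =>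
    hρint.comp_sub_right θ
  have hρshift_tot : ∀ θ : EuclideanSpace ℝ (Fin d),
      (∫ z : EuclideanSpace ℝ (Fin d), ρ (z - θ)) = 1 := fun θ => by
    rw [integral_sub_right_eq_self (fun z : EuclideanSpace ℝ (Fin d) => ρ z) θ, hρtot]
  -- each integral is in [0,1] and its log is ≤ 0
  have hlog_nonpos : ∀ (c : ℝ) (x θ : EuclideanSpace ℝ (Fin d)),
      Real.log (∫ z : EuclideanSpace ℝ (Fin d),
        (1 + Real.exp (c * ⟪x, z⟫))⁻¹ * ρ (z - θ)) ≤ 0 := by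
    intro c x θ
    have hnn : 0 ≤ ∫ z : EuclideanSpace ℝ (Fin d),
        (1 + Real.exp (c * ⟪x, z⟫))⁻¹ * ρ (z - θ) := by
      apply integral_nonneg
      intro z
      have : (0:ℝ) < 1 + Real.exp (c * ⟪x, z⟫) := by positivity
      positivity
    have hle : (∫ z : EuclideanSpace ℝ (Fin d),
        (1 + Real.exp (c * ⟪x, z⟫))⁻¹ * ρ (z - θ)) ≤
        ∫ z : EuclideanSpace ℝ (Fin d), ρ (z - θ) := by
      apply integral_mono_of_nonneg
      · filter_upwards with z
        have : (0:ℝ) < 1 + Real.exp (c * ⟪x, z⟫) := by positivity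
        positivity
      · exact hρshift_int θ
      · filter_upwards with z
        have h1 : (1 + Real.exp (c * ⟪x, z⟫))⁻¹ ≤ 1 := by
          rw [inv_le_one_iff₀]; right; nlinarith [Real.exp_pos (c * ⟪x, z⟫)]
        calc (1 + Real.exp (c * ⟪x, z⟫))⁻¹ * ρ (z - θ) ≤ 1 * ρ (z - θ) :=
              mul_le_mul_of_nonneg_right h1 (hρ_nonneg _)
          _ = ρ (z - θ) := one_mul _
    rw [hρshift_tot θ] at hle
    exact Real.log_nonpos hnn hle
  -- integrability of the integrand with unshifted ρ
  have hint : ∀ c : ℝ, ∀ x : EuclideanSpace ℝ (Fin d),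
      Integrable (fun z : EuclideanSpace ℝ (Fin d) =>
        (1 + Real.exp (c * ⟪x, z⟫))⁻¹ * ρ z) := by
    intro c x
    apply hρint.bdd_mul (c := 1)
    · apply Continuous.aestronglyMeasurable
      apply Continuous.inv₀
      · exact (continuous_const.add ((continuous_const.mul
          (continuous_const.inner continuous_id')).rexp))
      · intro z; positivity
    · refine Filter.Eventually.of_forall (fun z => ?_)
      rw [Real.norm_eq_abs, abs_of_nonneg (by positivity)]
      rw [inv_le_one_iff₀]; right; nlinarith [Real.exp_pos (c * ⟪x, z⟫)]
  -- symmetry: at θ = 0 each integral equals 1/2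
  have hhalf : ∀ (c : ℝ) (x : EuclideanSpace ℝ (Fin d)),
      (∫ z : EuclideanSpace ℝ (Fin d), (1 + Real.exp (c * ⟪x, z⟫))⁻¹ * ρ z) = 1 / 2 := by
    intro c x
    set J := ∫ z : EuclideanSpace ℝ (Fin d), (1 + Real.exp (c * ⟪x, z⟫))⁻¹ * ρ z with hJ
    set J' := ∫ z : EuclideanSpace ℝ (Fin d),
      (1 + Real.exp (-(c * ⟪x, z⟫)))⁻¹ * ρ z with hJ'
    have hsym : J = J' := by
      rw [hJ', ← integral_neg_eq_self]
      refine congrArg _ (funext fun z => ?_)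
      rw [inner_neg_right]
      have hρz : ρ (-z) = ρ z := by simp [hρ]
      rw [hρz]
      ring_nf
    have hptw : ∀ z : EuclideanSpace ℝ (Fin d),
        (1 + Real.exp (c * ⟪x, z⟫))⁻¹ * ρ z +
          (1 + Real.exp (-(c * ⟪x, z⟫)))⁻¹ * ρ z = ρ z := by
      intro z
      have he : (0:ℝ) < Real.exp (c * ⟪x, z⟫) := Real.exp_pos _
      rw [Real.exp_neg]
      field_simp
      ring
    have hci : (∫ z : EuclideanSpace ℝ (Fin d),
        ((1 + Real.exp (c * ⟪x, z⟫))⁻¹ * ρ z +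
          (1 + Real.exp (-(c * ⟪x, z⟫)))⁻¹ * ρ z)) = ∫ z : EuclideanSpace ℝ (Fin d), ρ z :=
      integral_congr_ae (Filter.Eventually.of_forall hptw)
    have hsum : J + J' = 1 := by
      rw [hJ, hJ', ← integral_add (hint c x) (by simpa using hint (-c) x), hci, hρtot]
    linarith [hsym, hsum]
  -- compute F 0
  have hF0 : F 0 = Real.log 2 := by
    rw [hF 0]
    have hterm : ∀ i : Fin n, Real.log
        (∫ z : EuclideanSpace ℝ (Fin d), (1 + Real.exp (-(y i) * ⟪X i, z⟫))⁻¹ *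
          ((2 * π * σ ^ 2) ^ (-(d : ℝ) / 2) * Real.exp (-‖z - 0‖ ^ 2 / (2 * σ ^ 2))))
        = - Real.log 2 := by
      intro i
      have h2 : (∫ z : EuclideanSpace ℝ (Fin d), (1 + Real.exp (-(y i) * ⟪X i, z⟫))⁻¹ *
          ((2 * π * σ ^ 2) ^ (-(d : ℝ) / 2) * Real.exp (-‖z - 0‖ ^ 2 / (2 * σ ^ 2))))
          = ∫ z : EuclideanSpace ℝ (Fin d), (1 + Real.exp (-(y i) * ⟪X i, z⟫))⁻¹ * ρ z := by
        refine congrArg _ (funext fun z => ?_)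
        rw [sub_zero]
      rw [h2, hhalf (-(y i)) (X i), one_div, Real.log_inv]
    simp only [hterm]
    rw [Finset.sum_const, Finset.card_univ, Fintype.card_fin, nsmul_eq_mul]
    have hn' : ((n:ℝ))⁻¹ * ((n:ℝ) * (-Real.log 2)) = -Real.log 2 := by
      rw [← mul_assoc, inv_mul_cancel₀ (by positivity : (n:ℝ) ≠ 0), one_mul]
    rw [hn', norm_zero]
    ring
  -- lower bound on F θstar
  have hFlower : τ * ‖θstar‖ ^ 2 ≤ F θstar := by
    rw [hF θstar]
    have hsumle : (∑ i : Fin n, Real.log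
        (∫ z : EuclideanSpace ℝ (Fin d), (1 + Real.exp (-(y i) * ⟪X i, z⟫))⁻¹ *
          ((2 * π * σ ^ 2) ^ (-(d : ℝ) / 2) * Real.exp (-‖z - θstar‖ ^ 2 / (2 * σ ^ 2)))))
        ≤ 0 := by
      apply Finset.sum_nonpos
      intro i _
      exact hlog_nonpos (-(y i)) (X i) θstar
    have hmn : 0 ≤ -((n : ℝ)⁻¹ * (∑ i : Fin n, Real.log
        (∫ z : EuclideanSpace ℝ (Fin d), (1 + Real.exp (-(y i) * ⟪X i, z⟫))⁻¹ *
          ((2 * π * σ ^ 2) ^ (-(d : ℝ) / 2) *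
            Real.exp (-‖z - θstar‖ ^ 2 / (2 * σ ^ 2)))))) := by
      rw [neg_nonneg]
      exact mul_nonpos_of_nonneg_of_nonpos (by positivity) hsumle
    linarith
  have hkey : τ * ‖θstar‖ ^ 2 ≤ Real.log 2 := by
    calc τ * ‖θstar‖ ^ 2 ≤ F θstar := hFlower
      _ ≤ F 0 := hmin 0
      _ = Real.log 2 := hF0
  have hlog4 : Real.log 4 = 2 * Real.log 2 := by
    rw [show (4:ℝ) = 2 ^ 2 by norm_num, Real.log_pow]
    push_cast; ring
  have hlog2 : 0 < Real.log 2 := Real.log_pos (by norm_num)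
  rw [le_div_iff₀ hτ]
  calc ‖θstar‖ ^ 2 * τ = τ * ‖θstar‖ ^ 2 := mul_comm _ _
    _ ≤ Real.log 2 := hkey
    _ ≤ Real.log 4 := by rw [hlog4]; linarith
end
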